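/- The greedy set-cover algorithm on a finite universe U with |U| = n returns a cover of size at most H_n · OPT, where OPT is the minimum size of a cover and H_n = Σ_{k=1}^n 1/k is the n-th harmonic number. -/
import Mathlib


/-- Approximation guarantee of the greedy set-cover algorithm: if the greedy
algorithm first covers the universe `U` after `t` steps, then `t ≤ H_{|U|} · OPT`,
where `H_n` is the `n`-th harmonic number. (Stated for an arbitrary cover `Cov`,
hence in particular for an optimal one.) -/
theorem greedy_set_cover_harmonic_bound {α : Type*} [DecidableEq α]
    (U : Finset α) (P : Finset (Finset α))
    (hcover : P.biUnion id = U)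
    (f : ℕ → Finset α)
    (hf : ∀ k, f k ∈ P)
    (hgreedy : ∀ k, ∀ B ∈ P,
      (B \ (Finset.range k).biUnion f).card ≤ (f k \ (Finset.range k).biUnion f).card)
    (t : ℕ)
    (ht : (Finset.range t).biUnion f = U)
    (htmin : ∀ k < t, (Finset.range k).biUnion f ≠ U)
    (Cov : Finset (Finset α)) (hCovP : Cov ⊆ P) (hCov : Cov.biUnion id = U) :
    (t : ℝ) ≤ (∑ k ∈ Finset.range U.card, (1 : ℝ) / (k + 1)) * Cov.card := by
  classical
  set H : ℕ → ℝ := fun n => ∑ k ∈ Finset.range n, (1 : ℝ) / (k + 1) with hH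
  set C : ℕ → Finset α := fun k => (Finset.range k).biUnion f with hCdef
  set u : ℕ → ℕ := fun k => (U \ C k).card with hu
  set g : ℕ → ℕ := fun k => (f k \ C k).card with hg
  have hfU : ∀ k, f k ⊆ U := by
    intro k x hx
    rw [← hcover]
    exact Finset.mem_biUnion.2 ⟨f k, hf k, hx⟩
  have hCU : ∀ k, C k ⊆ U := by
    intro k x hx
    rcases Finset.mem_biUnion.1 hx with ⟨j, _, hx⟩
    exact hfU j hx
  -- evolution of the uncovered count
  have hCsucc : ∀ k, C (k + 1) = f k ∪ C k := by
    intro k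
    simp [hCdef, Finset.range_add_one, Finset.biUnion_insert]
  have hstep : ∀ k, u (k + 1) + g k = u k := by
    intro k
    have h1 : U \ C (k + 1) = (U \ C k) \ (f k \ C k) := by
      rw [hCsucc]
      ext x
      simp only [Finset.mem_sdiff, Finset.mem_union]
      tauto
    have h2 : f k \ C k ⊆ U \ C k := by
      intro x hx
      rcases Finset.mem_sdiff.1 hx with ⟨hx1, hx2⟩
      exact Finset.mem_sdiff.2 ⟨hfU k hx1, hx2⟩
    have h3 : u (k + 1) = u k - g k := by
      rw [hu]
      simp only [h1]
      exact Finset.card_sdiff_of_subset h2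
    have h4 : g k ≤ u k := Finset.card_le_card h2
    omega
  -- the greedy choice covers at least a 1/|Cov| fraction of what's uncovered
  have hkey : ∀ k, u k ≤ Cov.card * g k := by
    intro k
    have h1 : U \ C k ⊆ Cov.biUnion (fun B => B \ C k) := by
      intro x hx
      rcases Finset.mem_sdiff.1 hx with ⟨hxU, hxC⟩
      rw [← hCov] at hxU
      rcases Finset.mem_biUnion.1 hxU with ⟨B, hB, hxB⟩
      exact Finset.mem_biUnion.2 ⟨B, hB, Finset.mem_sdiff.2 ⟨hxB, hxC⟩⟩
    calc u k ≤ (Cov.biUnion (fun B => B \ C k)).card := Finset.card_le_card h1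
      _ ≤ ∑ B ∈ Cov, (B \ C k).card := Finset.card_biUnion_le
      _ ≤ ∑ _B ∈ Cov, g k := Finset.sum_le_sum fun B hB => hgreedy k B (hCovP hB)
      _ = Cov.card * g k := by rw [Finset.sum_const, smul_eq_mul]
  -- harmonic difference bound
  have hHdiff : ∀ a b : ℕ, b ≤ a → ((a - b : ℕ) : ℝ) / a ≤ H a - H b := by
    intro a b hba
    rcases Nat.eq_zero_or_pos a with rfl | ha
    · interval_cases b
      simp
    have heq : H a - H b = ∑ j ∈ Finset.Ico b a, (1 : ℝ) / (j + 1) := by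
      rw [hH]
      exact (Finset.sum_Ico_eq_sub _ hba).symm
    rw [heq]
    have hterm : ∀ j ∈ Finset.Ico b a, (1 : ℝ) / a ≤ 1 / (j + 1) := by
      intro j hj
      have hj' := (Finset.mem_Ico.1 hj).2
      apply one_div_le_one_div_of_le
      · positivity
      · exact_mod_cast Nat.succ_le_of_lt hj'
    calc ((a - b : ℕ) : ℝ) / a = ∑ _j ∈ Finset.Ico b a, (1 : ℝ) / a := by
          rw [Finset.sum_const, Nat.card_Ico, nsmul_eq_mul]
          ring
      _ ≤ _ := Finset.sum_le_sum hterm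
  -- per-step inequality
  have hone : ∀ k < t, (1 : ℝ) ≤ (Cov.card : ℝ) * (H (u k) - H (u (k + 1))) := by
    intro k hk
    have hu1 : 1 ≤ u k := by
      have hne := htmin k hk
      have hnonempty : (U \ C k).Nonempty := by
        rw [Finset.sdiff_nonempty]
        intro h
        exact hne (Finset.Subset.antisymm (hCU k) h)
      exact Finset.card_pos.2 hnonempty
    have hk1 := hkey k
    have hs := hstep k
    have hg1 : 1 ≤ g k := by
      rcases Nat.eq_zero_or_pos (g k) with h | h
      · rw [h, Nat.mul_zero] at hk1; omega
      · exact h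
    have hm1 : 1 ≤ Cov.card := by
      rcases Nat.eq_zero_or_pos Cov.card with h | h
      · rw [h, Nat.zero_mul] at hk1; omega
      · exact h
    have hle : u (k + 1) ≤ u k := by omega
    have hd := hHdiff (u k) (u (k + 1)) hle
    have hgk : (u k - u (k + 1) : ℕ) = g k := by omega
    rw [hgk] at hd
    -- now: g k / u k ≤ H (u k) - H (u (k+1)), with u k ≤ m * g k
    have hupos : (0 : ℝ) < (u k : ℝ) := by exact_mod_cast hu1
    have hgpos : (0 : ℝ) < (g k : ℝ) := by exact_mod_cast hg1
    have hmpos : (0 : ℝ) < (Cov.card : ℝ) := by exact_mod_cast hm1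
    have hkr : (u k : ℝ) ≤ (Cov.card : ℝ) * g k := by exact_mod_cast hk1
    have h1 : (1 : ℝ) / (Cov.card : ℝ) ≤ (g k : ℝ) / (u k : ℝ) := by
      rw [div_le_div_iff₀ hmpos hupos]
      linarith
    have h2 : (1 : ℝ) / (Cov.card : ℝ) ≤ H (u k) - H (u (k + 1)) := le_trans h1 hd
    calc (1 : ℝ) = (Cov.card : ℝ) * (1 / (Cov.card : ℝ)) := by field_simp
      _ ≤ (Cov.card : ℝ) * (H (u k) - H (u (k + 1))) := by
          exact mul_le_mul_of_nonneg_left h2 (le_of_lt hmpos)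
  -- telescoping
  have hteq : (t : ℝ) = ∑ _k ∈ Finset.range t, (1 : ℝ) := by simp
  have hu0 : u 0 = U.card := by simp [hu, hCdef]
  have hut : u t = 0 := by simp [hu, hCdef, ht]
  calc (t : ℝ) = ∑ _k ∈ Finset.range t, (1 : ℝ) := hteq
    _ ≤ ∑ k ∈ Finset.range t, (Cov.card : ℝ) * (H (u k) - H (u (k + 1))) :=
        Finset.sum_le_sum fun k hk => hone k (Finset.mem_range.1 hk)
    _ = (Cov.card : ℝ) * ∑ k ∈ Finset.range t, (H (u k) - H (u (k + 1))) := by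
        rw [Finset.mul_sum]
    _ = (Cov.card : ℝ) * (H (u 0) - H (u t)) := by rw [Finset.sum_range_sub']
    _ = H U.card * Cov.card := by
        rw [hu0, hut]
        simp [hH]
        ring
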